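/- Let T be a terrain. Let g ∈ T lie in the interior of some edge of T, let p_r ∈ T lie in the interior of some edge of T with x(g) < x(p_r), and let g_r ∈ T with x(p_r) < x(g_r). Suppose g sees p_r and g_r sees p_r. Then every point p_ℓ ∈ T with x(p_ℓ) ≤ x(g) that is seen by g is also seen by g_r. -/

import Mathlib

open Set

/-- A terrain: `n ≥ 2` vertices `v 0, …, v (n-1)` in `ℝ²` with strictly
increasing `x`-coordinates. -/
structure Terrain where
  n : ℕ
  hn : 2 ≤ n
  v : ℕ → ℝ × ℝ
  mono : ∀ i j : ℕ, i < j → j < n → (v i).1 < (v j).1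

namespace Terrain

/-- The edge `e_i = [v_i, v_{i+1}]` (meaningful for `i + 1 < n`). -/
def edge (T : Terrain) (i : ℕ) : Set (ℝ × ℝ) := segment ℝ (T.v i) (T.v (i + 1))

/-- The terrain as a subset of `ℝ²`: the union of its edges. -/
def carrier (T : Terrain) : Set (ℝ × ℝ) := ⋃ i ∈ Finset.range (T.n - 1), T.edge i

/-- The interior of the edge `e_i`: the edge minus its two endpoints. -/
def intEdge (T : Terrain) (i : ℕ) : Set (ℝ × ℝ) := T.edge i \ {T.v i, T.v (i + 1)}

/-- `p` sees `q` iff every point of the segment `[p, q]` is nowhere strictly below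
the terrain, i.e. every point of the segment lies on or above the terrain point
with the same `x`-coordinate. -/
def sees (T : Terrain) (p q : ℝ × ℝ) : Prop :=
  ∀ z ∈ segment ℝ p q, ∀ t ∈ T.carrier, t.1 = z.1 → t.2 ≤ z.2

/-- The visibility region `V(p) = {q ∈ T : p sees q}`. -/
def vis (T : Terrain) (p : ℝ × ℝ) : Set (ℝ × ℝ) := {q ∈ T.carrier | T.sees p q}

/-- `V(C) = ⋃_{g ∈ C} V(g)`. -/
def visSet (T : Terrain) (C : Set (ℝ × ℝ)) : Set (ℝ × ℝ) := ⋃ g ∈ C, T.vis g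

/-- `C ⊆ T` is a cover of the terrain iff `V(C) = T`. -/
def IsCover (T : Terrain) (C : Set (ℝ × ℝ)) : Prop :=
  C ⊆ T.carrier ∧ T.visSet C = T.carrier

/-- The vertex set `V = {v_1, …, v_n}`. -/
def vertexSet (T : Terrain) : Set (ℝ × ℝ) := {p | ∃ i < T.n, p = T.v i}

/-- Edge `e_i` is critical w.r.t. `g ∈ C`: `C \ {g}` covers some part of,
but not all of, `int(e_i)`. -/
def IsCriticalWrt (T : Terrain) (C : Set (ℝ × ℝ)) (g : ℝ × ℝ) (i : ℕ) : Prop :=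
  (T.visSet (C \ {g}) ∩ T.intEdge i).Nonempty ∧ ¬ T.intEdge i ⊆ T.visSet (C \ {g})

/-- `g` is a left-guard of `e_i`: `x(g) < x(v_i)` and `e_i` is critical w.r.t. `g`. -/
def IsLeftGuard (T : Terrain) (C : Set (ℝ × ℝ)) (g : ℝ × ℝ) (i : ℕ) : Prop :=
  g.1 < (T.v i).1 ∧ T.IsCriticalWrt C g i

/-- `g` is a right-guard of `e_i`: `x(v_{i+1}) < x(g)` and `e_i` is critical w.r.t. `g`. -/
def IsRightGuard (T : Terrain) (C : Set (ℝ × ℝ)) (g : ℝ × ℝ) (i : ℕ) : Prop :=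
  (T.v (i + 1)).1 < g.1 ∧ T.IsCriticalWrt C g i

/-- `q` is extremal in `V(p)`: `q ∈ V(p)` and `q` has maximal or minimal
`x`-coordinate within its connected component of `V(p)`. -/
def Extremal (T : Terrain) (p q : ℝ × ℝ) : Prop :=
  q ∈ T.vis p ∧
    ((∀ r ∈ connectedComponentIn (T.vis p) q, r.1 ≤ q.1) ∨
     (∀ r ∈ connectedComponentIn (T.vis p) q, q.1 ≤ r.1))

/-- The guard candidate set `U`: all vertices together with the extremal points
of the vertices' visibility regions. -/
def Uset (T : Terrain) : Set (ℝ × ℝ) :=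
  T.vertexSet ∪ ⋃ i ∈ Finset.range T.n, {q | T.Extremal (T.v i) q}

/-- `OPT(G, W)`: the minimum cardinality of a finite `C ⊆ G` with `W ⊆ V(C)`. -/
noncomputable def OPT (T : Terrain) (G W : Set (ℝ × ℝ)) : ℕ :=
  sInf {k | ∃ C : Finset (ℝ × ℝ), ↑C ⊆ G ∧ W ⊆ T.visSet ↑C ∧ C.card = k}

end Terrain

/-!
A point `q` seen from a point `p` in the interior of an edge lies on or above the line carrying
that edge, because the segment `[p, q]` starts out above the edge. Hence a point interior to an
edge and seen from both sides lies on or below the chord joining its two observers. Visibility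
also propagates along convex chains: if `a` sees `b`, `b` sees `c` and `b` lies on or below the
chord `ac`, then `a` sees `c`. Applied at `g` this shows that `p_ℓ` sees `p_r`; applied at `p_r`
it then shows that `p_ℓ` sees `g_r`.
-/

open Filter Topology

section PlaneGeometry

/-- Twice the signed area of the triangle `a c t`; for `a.1 < c.1` it is `≤ 0` exactly when
`t` lies on or below the line through `a` and `c`. -/
def cross (a c t : ℝ × ℝ) : ℝ := (c.1 - a.1) * (t.2 - a.2) - (c.2 - a.2) * (t.1 - a.1)

variable {a b c p t v w z : ℝ × ℝ}

lemma cross_sub_cross_of_fst_eq (h : t.1 = z.1) :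
    cross a c z - cross a c t = (c.1 - a.1) * (z.2 - t.2) := by
  unfold cross; rw [h]; ring

lemma cross_eq_zero_of_mem_segment (hz : z ∈ segment ℝ a c) : cross a c z = 0 := by
  obtain ⟨r, s, -, -, hrs, rfl⟩ := hz
  obtain rfl : r = 1 - s := by linarith
  simp only [cross, Prod.fst_add, Prod.snd_add, Prod.smul_fst, Prod.smul_snd, smul_eq_mul]
  ring

lemma cross_convex_combination (a c p q : ℝ × ℝ) (s : ℝ) :
    cross a c ((1 - s) • p + s • q) = (1 - s) * cross a c p + s * cross a c q := by
  simp only [cross, Prod.fst_add, Prod.snd_add, Prod.smul_fst, Prod.smul_snd, smul_eq_mul]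
  ring

lemma fst_mem_Icc_of_mem_segment (hac : a.1 ≤ c.1) (hz : z ∈ segment ℝ a c) :
    z.1 ∈ Icc a.1 c.1 :=
  segment_eq_Icc hac ▸ (Prod.segment_subset a c hz).1

lemma fst_mem_Ioo_of_mem_openSegment (hac : a.1 < c.1) (hz : z ∈ openSegment ℝ a c) :
    z.1 ∈ Ioo a.1 c.1 :=
  openSegment_eq_Ioo hac ▸ (Prod.openSegment_subset a c hz).1

lemma exists_mem_segment_fst_eq (hac : a.1 ≤ c.1) {x : ℝ} (hx : x ∈ Icc a.1 c.1) :
    ∃ z ∈ segment ℝ a c, z.1 = x := by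
  rw [← segment_eq_Icc hac] at hx
  simpa using (image_segment ℝ (LinearMap.fst ℝ ℝ ℝ).toAffineMap a c).ge hx

lemma cross_nonpos_of_cross_nonpos_left (hb : cross a c b ≤ 0) (ht : cross a b t ≤ 0)
    (hab : a.1 < b.1) (hac : a.1 ≤ c.1) (hat : a.1 ≤ t.1) : cross a c t ≤ 0 := by
  unfold cross at *
  nlinarith [mul_nonneg (sub_nonneg.2 hac) (sub_nonneg.2 hat)]

lemma cross_nonpos_of_cross_nonpos_right (hb : cross a c b ≤ 0) (ht : cross b c t ≤ 0)
    (hbc : b.1 < c.1) (hac : a.1 ≤ c.1) (htc : t.1 ≤ c.1) : cross a c t ≤ 0 := by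
  unfold cross at *
  nlinarith [mul_nonneg (sub_nonneg.2 hac) (sub_nonneg.2 htc)]

lemma cross_nonpos_of_cross_nonneg (hvw : v.1 < w.1) (hp : cross v w p = 0)
    (ha : 0 ≤ cross v w a) (hb : 0 ≤ cross v w b) (hap : a.1 ≤ p.1) (hpb : p.1 ≤ b.1) :
    cross a b p ≤ 0 := by
  unfold cross at *
  nlinarith [mul_nonneg (sub_nonneg.2 hap) (sub_nonneg.2 hpb)]

end PlaneGeometry

namespace Terrain

variable {T : Terrain} {a b c p q : ℝ × ℝ} {j : ℕ}

protected lemma sees.symm (h : T.sees p q) : T.sees q p := by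
  rwa [sees, segment_symm]

lemma edge_subset_carrier (hj : j + 1 < T.n) : T.edge j ⊆ T.carrier :=
  subset_biUnion_of_mem (u := T.edge) (Finset.mem_coe.2 (Finset.mem_range.2 (by omega)))

lemma fst_lt_fst_succ (hj : j + 1 < T.n) : (T.v j).1 < (T.v (j + 1)).1 :=
  T.mono j (j + 1) j.lt_succ_self hj

lemma intEdge_subset_openSegment : T.intEdge j ⊆ openSegment ℝ (T.v j) (T.v (j + 1)) := by
  rintro p ⟨hp, hpv⟩
  simp only [mem_insert_iff, mem_singleton_iff, not_or] at hpv
  exact mem_openSegment_of_ne_left_right (Ne.symm hpv.1) (Ne.symm hpv.2) hp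

lemma sees_iff_forall_cross_nonpos (hac : a.1 < c.1) :
    T.sees a c ↔ ∀ t ∈ T.carrier, t.1 ∈ Icc a.1 c.1 → cross a c t ≤ 0 := by
  constructor
  · intro h t ht htx
    obtain ⟨z, hz, hzt⟩ := exists_mem_segment_fst_eq hac.le htx
    have hdiff := cross_sub_cross_of_fst_eq (a := a) (c := c) hzt.symm
    rw [cross_eq_zero_of_mem_segment hz] at hdiff
    have htz : t.2 ≤ z.2 := h z hz t ht hzt.symm
    nlinarith
  · intro h z hz t ht htz
    have hdiff := cross_sub_cross_of_fst_eq (a := a) (c := c) htz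
    rw [cross_eq_zero_of_mem_segment hz] at hdiff
    have ht_below := h t ht (htz ▸ fst_mem_Icc_of_mem_segment hac.le hz)
    nlinarith

lemma cross_edge_nonneg_of_sees (hj : j + 1 < T.n) (hp : p ∈ T.intEdge j) (hpq : T.sees p q) :
    0 ≤ cross (T.v j) (T.v (j + 1)) q := by
  set v := T.v j
  set w := T.v (j + 1)
  have hvw : v.1 < w.1 := fst_lt_fst_succ hj
  have hpx : p.1 ∈ Ioo v.1 w.1 := fst_mem_Ioo_of_mem_openSegment hvw (intEdge_subset_openSegment hp)
  have hnear : ∀ᶠ s in 𝓝 (0 : ℝ), p.1 + s * (q.1 - p.1) ∈ Ioo v.1 w.1 :=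
    (by fun_prop : Continuous fun s : ℝ => p.1 + s * (q.1 - p.1)).continuousAt.eventually_mem
      (by simpa using Ioo_mem_nhds hpx.1 hpx.2)
  obtain ⟨s, hsx, hs0, hs1⟩ :=
    ((hnear.filter_mono nhdsWithin_le_nhds).and (Ioc_mem_nhdsGT one_pos)).exists
  set z := (1 - s) • p + s • q
  have hz : z ∈ segment ℝ p q := ⟨1 - s, s, by linarith, hs0.le, by ring, rfl⟩
  have hzx : z.1 = p.1 + s * (q.1 - p.1) := by
    simp only [z, Prod.fst_add, Prod.smul_fst, smul_eq_mul]; ring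
  obtain ⟨t, ht, htz⟩ := exists_mem_segment_fst_eq hvw.le (hzx ▸ Ioo_subset_Icc_self hsx)
  have htz2 : t.2 ≤ z.2 := hpq z hz t (edge_subset_carrier hj ht) htz
  have hdiff := cross_sub_cross_of_fst_eq (a := v) (c := w) htz
  rw [cross_eq_zero_of_mem_segment ht, cross_convex_combination,
    cross_eq_zero_of_mem_segment hp.1] at hdiff
  nlinarith [mul_nonneg (sub_nonneg.2 hvw.le) (sub_nonneg.2 htz2)]

lemma cross_nonpos_of_sees_of_mem_intEdge (hj : j + 1 < T.n) (hp : p ∈ T.intEdge j)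
    (hap : a.1 ≤ p.1) (hpb : p.1 ≤ b.1) (hsa : T.sees p a) (hsb : T.sees p b) :
    cross a b p ≤ 0 :=
  cross_nonpos_of_cross_nonneg (fst_lt_fst_succ hj) (cross_eq_zero_of_mem_segment hp.1)
    (cross_edge_nonneg_of_sees hj hp hsa) (cross_edge_nonneg_of_sees hj hp hsb) hap hpb

lemma sees_of_cross_nonpos (hab : a.1 ≤ b.1) (hbc : b.1 < c.1) (hb : cross a c b ≤ 0)
    (hsab : T.sees a b) (hsbc : T.sees b c) : T.sees a c := by
  have hac : a.1 < c.1 := hab.trans_lt hbc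
  rw [sees_iff_forall_cross_nonpos hac]
  rintro t ht ⟨hat, htc⟩
  rcases lt_or_ge t.1 b.1 with htb | hbt
  · have hab' : a.1 < b.1 := hat.trans_lt htb
    exact cross_nonpos_of_cross_nonpos_left hb
      ((sees_iff_forall_cross_nonpos hab').1 hsab t ht ⟨hat, htb.le⟩) hab' hac.le hat
  · exact cross_nonpos_of_cross_nonpos_right hb
      ((sees_iff_forall_cross_nonpos hbc).1 hsbc t ht ⟨hbt, htc⟩) hbc hac.le htc

end Terrain

theorem convex_chain_domination_general (T : Terrain) (g pr gr : ℝ × ℝ)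
    (hg : ∃ i, i + 1 < T.n ∧ g ∈ T.intEdge i)
    (hpr : ∃ j, j + 1 < T.n ∧ pr ∈ T.intEdge j)
    (hx1 : g.1 < pr.1) (hx2 : pr.1 < gr.1)
    (hsee1 : T.sees g pr) (hsee2 : T.sees gr pr) :
    ∀ pl ∈ T.carrier, pl.1 ≤ g.1 → T.sees g pl → T.sees gr pl := by
  intro pl _ hplg hsee
  obtain ⟨i, hi, hgi⟩ := hg
  obtain ⟨j, hj, hprj⟩ := hpr
  have hplpr : pl.1 ≤ pr.1 := hplg.trans hx1.le
  have hg_below : cross pl pr g ≤ 0 :=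
    Terrain.cross_nonpos_of_sees_of_mem_intEdge hi hgi hplg hx1.le hsee hsee1
  have hsee_pl_pr : T.sees pl pr :=
    Terrain.sees_of_cross_nonpos hplg hx1 hg_below hsee.symm hsee1
  have hpr_below : cross pl gr pr ≤ 0 :=
    Terrain.cross_nonpos_of_sees_of_mem_intEdge hj hprj hplpr hx2.le hsee_pl_pr.symm hsee2.symm
  exact (Terrain.sees_of_cross_nonpos hplpr hx2 hpr_below hsee_pl_pr hsee2.symm).symm

/-- Let `g` and `p_r` lie in interiors of edges with `x(g) < x(p_r)`,
let `g_r ∈ T` with `x(p_r) < x(g_r)`, and suppose `g` sees `p_r` and `g_r` sees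
`p_r`. Then every `p_ℓ ∈ T` with `x(p_ℓ) ≤ x(g)` seen by `g` is also seen by `g_r`. -/
theorem convex_chain_domination (T : Terrain) (g pr gr : ℝ × ℝ)
    (hg : ∃ i, i + 1 < T.n ∧ g ∈ T.intEdge i)
    (hpr : ∃ j, j + 1 < T.n ∧ pr ∈ T.intEdge j)
    (hgr : gr ∈ T.carrier)
    (hx1 : g.1 < pr.1) (hx2 : pr.1 < gr.1)
    (hsee1 : T.sees g pr) (hsee2 : T.sees gr pr) :
    ∀ pl ∈ T.carrier, pl.1 ≤ g.1 → T.sees g pl → T.sees gr pl :=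
  convex_chain_domination_general T g pr gr hg hpr hx1 hx2 hsee1 hsee2
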